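/- Let K be a natural number, f : ℝ → ℝ a C^(K+1) function, C > 0 and λ ≥ 1 real. Define g(x) := √( C² + ∑_{N=0}^{K} λ^(−2N) · (f^(N)(x))² ), where f^(N) denotes the N-th derivative. Then g is differentiable and for every x, |g'(x)| ≤ λ · g(x) + λ^(−K) · |f^(K+1)(x)|. -/

import Mathlib

/-!
Put `a N := λ^(-N) f^(N)`, so that `g = √(C² + ∑_{N ≤ K} a N ²)` and `a N' = λ a (N+1)`.
Then `g g' = λ ∑_{N ≤ K} a N a (N+1)`. By Cauchy–Schwarz the terms with `N < K` sum to at most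
`∑ a N ² ≤ g²`, and the last term is at most `g |a (K+1)|`, so `g |g'| ≤ λ g (g + |a (K+1)|)`;
dividing by `g ≥ C > 0` gives the claim, since `λ |a (K+1)| = λ^(-K) |f^(K+1)|`.
-/

open Finset

lemma abs_sum_range_mul_succ_le_sum_sq (a : ℕ → ℝ) (K : ℕ) :
    |∑ N ∈ range K, a N * a (N + 1)| ≤ ∑ N ∈ range (K + 1), a N ^ 2 := by
  have hS : 0 ≤ ∑ N ∈ range (K + 1), a N ^ 2 := sum_nonneg fun _ _ => sq_nonneg _
  have h_init : ∑ N ∈ range K, a N ^ 2 ≤ ∑ N ∈ range (K + 1), a N ^ 2 := by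
    rw [sum_range_succ]
    linarith [sq_nonneg (a K)]
  have h_tail : ∑ N ∈ range K, a (N + 1) ^ 2 ≤ ∑ N ∈ range (K + 1), a N ^ 2 := by
    rw [sum_range_succ']
    linarith [sq_nonneg (a 0)]
  refine abs_le_of_sq_le_sq ?_ hS
  calc (∑ N ∈ range K, a N * a (N + 1)) ^ 2
      ≤ (∑ N ∈ range K, a N ^ 2) * ∑ N ∈ range K, a (N + 1) ^ 2 :=
        sum_mul_sq_le_sq_mul_sq _ _ _
    _ ≤ (∑ N ∈ range (K + 1), a N ^ 2) ^ 2 := by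
        rw [sq]
        exact mul_le_mul h_init h_tail (sum_nonneg fun _ _ => sq_nonneg _) hS

lemma abs_sum_range_mul_succ_le_sqrt_mul (a : ℕ → ℝ) (K : ℕ) {c : ℝ} (hc : 0 ≤ c) :
    |∑ N ∈ range (K + 1), a N * a (N + 1)| ≤
      √(c + ∑ N ∈ range (K + 1), a N ^ 2) *
        (√(c + ∑ N ∈ range (K + 1), a N ^ 2) + |a (K + 1)|) := by
  set S := ∑ N ∈ range (K + 1), a N ^ 2
  have hG_sq : √(c + S) ^ 2 = c + S :=
    Real.sq_sqrt (add_nonneg hc (sum_nonneg fun _ _ => sq_nonneg _))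
  have h_last : |a K| ≤ √(c + S) := by
    refine Real.abs_le_sqrt ?_
    have : a K ^ 2 ≤ S := single_le_sum (fun _ _ => sq_nonneg _) (self_mem_range_succ K)
    linarith
  calc |∑ N ∈ range (K + 1), a N * a (N + 1)|
      ≤ |∑ N ∈ range K, a N * a (N + 1)| + |a K| * |a (K + 1)| := by
        rw [sum_range_succ, ← abs_mul]
        exact abs_add_le _ _
    _ ≤ √(c + S) ^ 2 + √(c + S) * |a (K + 1)| := by
        gcongr
        rw [hG_sq]
        linarith [abs_sum_range_mul_succ_le_sum_sq a K]
    _ = _ := by ring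

lemma hasDerivAt_sqrt_add_sum_sq {ι : Type*} (s : Finset ι) {c : ℝ} (hc : 0 < c)
    {a a' : ι → ℝ → ℝ} {x : ℝ} (ha : ∀ i ∈ s, HasDerivAt (a i) (a' i x) x) :
    HasDerivAt (fun y => √(c + ∑ i ∈ s, a i y ^ 2))
      ((∑ i ∈ s, a i x * a' i x) / √(c + ∑ i ∈ s, a i x ^ 2)) x := by
  have hpos : 0 < c + ∑ i ∈ s, a i x ^ 2 :=
    add_pos_of_pos_of_nonneg hc (sum_nonneg fun _ _ => sq_nonneg _)
  have hsum : HasDerivAt (fun y => c + ∑ i ∈ s, a i y ^ 2)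
      (∑ i ∈ s, 2 * a i x * a' i x) x := by
    refine (HasDerivAt.fun_sum fun i hi => ?_).const_add c
    simpa [mul_comm] using (ha i hi).fun_pow 2
  refine ((Real.hasDerivAt_sqrt hpos.ne').comp x hsum).congr_deriv ?_
  have hG : √(c + ∑ i ∈ s, a i x ^ 2) ≠ 0 := (Real.sqrt_pos.mpr hpos).ne'
  simp_rw [mul_assoc, ← mul_sum]
  field_simp

lemma zpow_neg_natCast_eq_mul_zpow_neg_succ {G₀ : Type*} [GroupWithZero G₀] {l : G₀}
    (hl : l ≠ 0) (N : ℕ) :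
    l ^ (-(N : ℤ)) = l * l ^ (-((N + 1 : ℕ) : ℤ)) := by
  rw [← zpow_one_add₀ hl]
  congr 1
  push_cast
  ring

lemma hasDerivAt_zpow_mul_iteratedDeriv {𝕜 : Type*} [NontriviallyNormedField 𝕜] {n : ℕ}
    {f : 𝕜 → 𝕜} (hf : ContDiff 𝕜 (n + 1) f) {l : 𝕜} (hl : l ≠ 0) {N : ℕ} (hN : N ≤ n) (x : 𝕜) :
    HasDerivAt (fun y => l ^ (-(N : ℤ)) * iteratedDeriv N f y)
      (l * (l ^ (-((N + 1 : ℕ) : ℤ)) * iteratedDeriv (N + 1) f x)) x := by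
  have hdiff : Differentiable 𝕜 (iteratedDeriv N f) :=
    hf.differentiable_iteratedDeriv N (by exact_mod_cast Nat.lt_succ_of_le hN)
  rw [← mul_assoc, ← zpow_neg_natCast_eq_mul_zpow_neg_succ hl, iteratedDeriv_succ]
  exact (hdiff x).hasDerivAt.const_mul _

theorem stmt_15 (K : ℕ) (f : ℝ → ℝ) (hf : ContDiff ℝ (K + 1) f)
    (C l : ℝ) (hC : 0 < C) (hl : 1 ≤ l)
    (g : ℝ → ℝ)
    (hg : ∀ x, g x = Real.sqrt (C ^ 2 +
      ∑ N ∈ Finset.range (K + 1), l ^ (-(2 * (N : ℤ))) * (iteratedDeriv N f x) ^ 2)) :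
    Differentiable ℝ g ∧
      ∀ x, |deriv g x| ≤ l * g x + l ^ (-(K : ℤ)) * |iteratedDeriv (K + 1) f x| := by
  have hl0 : 0 < l := one_pos.trans_le hl
  set a : ℕ → ℝ → ℝ := fun N y => l ^ (-(N : ℤ)) * iteratedDeriv N f y
  have hga : g = fun y => √(C ^ 2 + ∑ N ∈ range (K + 1), a N y ^ 2) := by
    funext y
    rw [hg]
    congr 2
    refine sum_congr rfl fun N _ => ?_
    rw [mul_pow, ← zpow_natCast (l ^ _), ← zpow_mul]
    ring_nf
  have hderiv : ∀ x, HasDerivAt g ((∑ N ∈ range (K + 1), a N x * (l * a (N + 1) x)) /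
      √(C ^ 2 + ∑ N ∈ range (K + 1), a N x ^ 2)) x := fun x => hga ▸
    hasDerivAt_sqrt_add_sum_sq (a' := fun N y => l * a (N + 1) y) _ (pow_pos hC 2) fun N hN =>
      hasDerivAt_zpow_mul_iteratedDeriv hf hl0.ne' (Nat.lt_succ_iff.mp (mem_range.mp hN)) x
  refine ⟨fun x => (hderiv x).differentiableAt, fun x => ?_⟩
  have hG : 0 < √(C ^ 2 + ∑ N ∈ range (K + 1), a N x ^ 2) := Real.sqrt_pos.mpr (by positivity)
  have htop : l * |a (K + 1) x| = l ^ (-(K : ℤ)) * |iteratedDeriv (K + 1) f x| := by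
    rw [abs_mul, abs_of_pos (zpow_pos hl0 _), ← mul_assoc,
      ← zpow_neg_natCast_eq_mul_zpow_neg_succ hl0.ne']
  rw [(hderiv x).deriv, hga, ← htop]
  simp_rw [mul_left_comm _ l, ← mul_sum]
  rw [abs_div, abs_mul, abs_of_pos hl0, abs_of_pos hG, div_le_iff₀ hG]
  calc l * |∑ N ∈ range (K + 1), a N x * a (N + 1) x|
      ≤ l * (√(C ^ 2 + ∑ N ∈ range (K + 1), a N x ^ 2) *
          (√(C ^ 2 + ∑ N ∈ range (K + 1), a N x ^ 2) + |a (K + 1) x|)) := by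
        gcongr
        exact abs_sum_range_mul_succ_le_sqrt_mul (fun N => a N x) K (sq_nonneg C)
    _ = _ := by ring
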